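/- A continuous function u on a planar domain Ω that satisfies the local median value property cannot attain a strict local maximum at any interior point: there is no x₀ ∈ Ω and ρ > 0 with B(x₀,ρ) ⊂ Ω such that u(x) < u(x₀) for all x ∈ B(x₀,ρ) \ {x₀}. -/

import Mathlib

open MeasureTheory Set Metric Real Filter Topology

/-- `m` is a median of `u` over the circle `∂B(x,r)` with respect to arclength measure,
parametrized by `θ ↦ x + r e^{iθ}`. -/
def IsCircleMedian (x : ℂ) (r : ℝ) (u : ℂ → ℝ) (m : ℝ) : Prop :=
  volume (Ioc (0:ℝ) (2*π)) / 2 ≤ volume {θ ∈ Ioc (0:ℝ) (2*π) | m ≤ u (circleMap x r θ)} ∧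
  volume (Ioc (0:ℝ) (2*π)) / 2 ≤ volume {θ ∈ Ioc (0:ℝ) (2*π) | u (circleMap x r θ) ≤ m}

/-- `u` has the local median value property on `Ω`. -/
def HasLMVP (Ω : Set ℂ) (u : ℂ → ℝ) : Prop :=
  ∃ R : ℂ → ℝ, ContinuousOn R Ω ∧
    (∀ x ∈ Ω, 0 < R x ∧ R x ≤ Metric.infDist x Ωᶜ) ∧
    (∀ x ∈ Ω, ∀ r : ℝ, 0 < r → r ≤ R x → IsCircleMedian x r u (u x))

theorem circleMap_mem_ball_diff_center {c : ℂ} {r ρ : ℝ} (hr : 0 < r) (hrρ : r < ρ) (θ : ℝ) :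
    circleMap c r θ ∈ ball c ρ \ {c} :=
  ⟨sphere_subset_ball hrρ (circleMap_mem_sphere c hr.le θ), circleMap_ne_center hr.ne'⟩

theorem IsCircleMedian.exists_le {x : ℂ} {r : ℝ} {u : ℂ → ℝ} {m : ℝ}
    (h : IsCircleMedian x r u m) : ∃ θ, m ≤ u (circleMap x r θ) := by
  have hpos : 0 < volume (Ioc (0:ℝ) (2*π)) / 2 := by
    rw [Real.volume_Ioc, sub_zero]
    exact ENNReal.div_pos (ENNReal.ofReal_pos.mpr two_pi_pos).ne' ENNReal.ofNat_ne_top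
  obtain ⟨θ, -, hθ⟩ := nonempty_of_measure_ne_zero (hpos.trans_le h.1).ne'
  exact ⟨θ, hθ⟩

theorem no_strict_local_max (Ω : Set ℂ)
    (u : ℂ → ℝ) (hlmvp : HasLMVP Ω u) :
    ¬ ∃ x₀ ∈ Ω, ∃ ρ > (0:ℝ), ball x₀ ρ ⊆ Ω ∧
      ∀ x ∈ ball x₀ ρ \ {x₀}, u x < u x₀ := by
  rintro ⟨x₀, hx₀, ρ, hρ, -, hmax⟩
  obtain ⟨R, -, hR, hmed⟩ := hlmvp
  set r := min (R x₀) (ρ / 2)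
  have hr : 0 < r := lt_min (hR x₀ hx₀).1 (half_pos hρ)
  have hrρ : r < ρ := (min_le_right _ _).trans_lt (half_lt_self hρ)
  obtain ⟨θ, hθ⟩ := (hmed x₀ hx₀ r hr (min_le_left _ _)).exists_le
  exact (hmax _ (circleMap_mem_ball_diff_center hr hrρ θ)).not_ge hθ
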